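/- arXiv:2310.13199 — 4 statements merged into one kernel-verified Lean document; each statement's English description precedes it below -/
import Mathlib

section
/- Let C_A be the convex cone generated by vectors {v_i : i ∈ I_A} in a real Hilbert space, let w ∈ H, d = w − P_{C_A}(w), and define the working index set I_W = {i ∈ I_A : ⟨v_i, d⟩ = 0} and the cone C_W generated by {v_i : i ∈ I_W}. Then P_{C_W}(w) = P_{C_A}(w); consequently w − P_{C_W}(w) = d. -/
/-!
Optimality of `pA` on the cone `C_A` gives `⟪d, pA⟫ = 0` and `⟪d, v i⟫ ≤ 0` for all `i`. Writing
`pA = ∑ μ i • v i` with `μ ≥ 0`, the sum `∑ μ i ⟪v i, d⟫ = 0` has nonpositive terms, so `μ i = 0`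
whenever `⟪v i, d⟫ ≠ 0`; hence `pA ∈ C_W`. As `C_W ⊆ C_A`, `pA` also minimizes the distance to `w`
over `C_W`, and the minimizer over a convex set is unique.
-/

open RealInnerProductSpace

section

variable {H : Type*} [NormedAddCommGroup H] [InnerProductSpace ℝ H]

theorem inner_sub_le_zero_of_forall_norm_sub_le {K : Set H} (hK : Convex ℝ K) {w p : H}
    (hp : p ∈ K) (hmin : ∀ y ∈ K, ‖w - p‖ ≤ ‖w - y‖) {y : H} (hy : y ∈ K) :
    ⟪w - p, y - p⟫ ≤ 0 := by
  have : Nonempty K := ⟨⟨p, hp⟩⟩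
  have hinf : ‖w - p‖ = ⨅ y : K, ‖w - y‖ :=
    le_antisymm (le_ciInf fun y ↦ hmin y y.2)
      (ciInf_le ⟨0, Set.forall_mem_range.2 fun _ ↦ norm_nonneg _⟩ (⟨p, hp⟩ : K))
  exact (norm_eq_iInf_iff_real_inner_le_zero hK hp).mp hinf y hy

theorem eq_of_forall_norm_sub_le {K : Set H} (hK : Convex ℝ K) {w p q : H}
    (hp : p ∈ K) (hq : q ∈ K) (hminp : ∀ y ∈ K, ‖w - p‖ ≤ ‖w - y‖)
    (hminq : ∀ y ∈ K, ‖w - q‖ ≤ ‖w - y‖) : p = q := by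
  have hpq := inner_sub_le_zero_of_forall_norm_sub_le hK hp hminp hq
  have hqp := inner_sub_le_zero_of_forall_norm_sub_le hK hq hminq hp
  have : ⟪q - p, q - p⟫ = ⟪w - p, q - p⟫ + ⟪w - q, p - q⟫ := by
    rw [← neg_sub q p, inner_neg_right, ← sub_eq_add_neg, ← inner_sub_left,
      sub_sub_sub_cancel_left]
  have : ⟪q - p, q - p⟫ ≤ 0 := by linarith
  exact (sub_eq_zero.mp (real_inner_self_nonpos.mp this)).symm

namespace PointedCone

variable {C : PointedCone ℝ H} {w p : H}

theorem inner_sub_self_eq_zero_of_forall_norm_sub_le (hp : p ∈ C)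
    (hmin : ∀ y ∈ C, ‖w - p‖ ≤ ‖w - y‖) : ⟪w - p, p⟫ = 0 := by
  have h0 := inner_sub_le_zero_of_forall_norm_sub_le C.convex hp hmin C.zero_mem
  have h2 := inner_sub_le_zero_of_forall_norm_sub_le C.convex hp hmin
    (C.smul_mem zero_le_two hp)
  rw [zero_sub, inner_neg_right] at h0
  rw [two_smul, add_sub_cancel_right] at h2
  linarith

theorem inner_sub_le_zero_of_forall_norm_sub_le (hp : p ∈ C)
    (hmin : ∀ y ∈ C, ‖w - p‖ ≤ ‖w - y‖) {y : H} (hy : y ∈ C) : ⟪w - p, y⟫ ≤ 0 := by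
  simpa using _root_.inner_sub_le_zero_of_forall_norm_sub_le C.convex hp hmin (C.add_mem hp hy)

end PointedCone

variable {ι : Type*} [Fintype ι] (v : ι → H)

def conicCombinations (s : Set ι) : PointedCone ℝ H :=
  .ofConeComb {x | ∃ μ : ι → ℝ, (∀ i, 0 ≤ μ i) ∧ (∀ i, i ∉ s → μ i = 0) ∧ x = ∑ i, μ i • v i}
    ⟨0, fun _ ↦ 0, fun _ ↦ le_rfl, fun _ _ ↦ rfl, by simp⟩ <| by
      rintro _ ⟨μ, hμ, hμs, rfl⟩ _ ⟨ν, hν, hνs, rfl⟩ a ha b hb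
      refine ⟨fun i ↦ a * μ i + b * ν i,
        fun i ↦ add_nonneg (mul_nonneg ha (hμ i)) (mul_nonneg hb (hν i)),
        fun i hi ↦ by simp [hμs i hi, hνs i hi], ?_⟩
      simp [Finset.smul_sum, Finset.sum_add_distrib, add_smul, mul_smul]

variable {v}

theorem mem_conicCombinations {s : Set ι} {x : H} :
    x ∈ conicCombinations v s ↔
      ∃ μ : ι → ℝ, (∀ i, 0 ≤ μ i) ∧ (∀ i, i ∉ s → μ i = 0) ∧ x = ∑ i, μ i • v i :=
  Iff.rfl

theorem conicCombinations_mono {s t : Set ι} (hst : s ⊆ t) :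
    conicCombinations v s ≤ conicCombinations v t := by
  rintro _ ⟨μ, hμ, hμs, rfl⟩
  exact ⟨μ, hμ, fun i hi ↦ hμs i (fun h ↦ hi (hst h)), rfl⟩

theorem apply_mem_conicCombinations {s : Set ι} {i : ι} (hi : i ∈ s) :
    v i ∈ conicCombinations v s := by
  classical
  exact ⟨Pi.single i 1, (Pi.single_nonneg.2 zero_le_one : (0 : ι → ℝ) ≤ _),
    fun j hj ↦ Pi.single_eq_of_ne (ne_of_mem_of_not_mem hi hj).symm 1,
    by simp [Pi.single_apply, ite_smul]⟩

theorem eq_zero_of_inner_sum_smul_eq_zero {μ : ι → ℝ} (hμ : ∀ i, 0 ≤ μ i) {d : H}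
    (hv : ∀ i, ⟪v i, d⟫ ≤ 0) (hsum : ⟪∑ i, μ i • v i, d⟫ = 0) {i : ι} (hi : ⟪v i, d⟫ ≠ 0) :
    μ i = 0 := by
  simp only [sum_inner, real_inner_smul_left] at hsum
  have hterm := (Finset.sum_eq_zero_iff_of_nonpos fun j _ ↦
    mul_nonpos_of_nonneg_of_nonpos (hμ j) (hv j)).mp hsum i (Finset.mem_univ i)
  exact (mul_eq_zero.mp hterm).resolve_right hi

end

/-- The projections of `w` onto the full active cone `C_A` and onto the
working cone `C_W` coincide. -/
theorem stmt6 {H : Type*} [NormedAddCommGroup H] [InnerProductSpace ℝ H]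
    {ι : Type*} [Fintype ι] (v : ι → H)
    (CA : Set H)
    (hCA : CA = {x | ∃ μ : ι → ℝ, (∀ i, 0 ≤ μ i) ∧ x = ∑ i, μ i • v i})
    (w pA : H) (hpA_mem : pA ∈ CA) (hpA : ∀ y ∈ CA, ‖w - pA‖ ≤ ‖w - y‖)
    (d : H) (hd : d = w - pA)
    (IW : Set ι) (hIW : IW = {i | ⟪v i, d⟫ = 0})
    (CW : Set H)
    (hCW : CW = {x | ∃ μ : ι → ℝ, (∀ i, 0 ≤ μ i) ∧ (∀ i, i ∉ IW → μ i = 0) ∧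
      x = ∑ i, μ i • v i})
    (pW : H) (hpW_mem : pW ∈ CW) (hpW : ∀ y ∈ CW, ‖w - pW‖ ≤ ‖w - y‖) :
    pW = pA ∧ w - pW = d := by
  obtain rfl : CA = conicCombinations v Set.univ := by
    ext x
    simp [hCA, mem_conicCombinations]
  obtain rfl : CW = conicCombinations v IW := hCW
  have hvd : ∀ i, ⟪v i, d⟫ ≤ 0 := fun i ↦ by
    simpa only [hd, real_inner_comm] using PointedCone.inner_sub_le_zero_of_forall_norm_sub_le
      hpA_mem hpA (apply_mem_conicCombinations (Set.mem_univ i))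
  have hpAd : ⟪pA, d⟫ = 0 := by
    rw [hd, real_inner_comm]
    exact PointedCone.inner_sub_self_eq_zero_of_forall_norm_sub_le hpA_mem hpA
  have hpA_memW : pA ∈ conicCombinations v IW := by
    obtain ⟨μ, hμ, -, rfl⟩ := hpA_mem
    refine ⟨μ, hμ, fun i hi ↦ eq_zero_of_inner_sum_smul_eq_zero hμ hvd hpAd ?_, rfl⟩
    rwa [hIW] at hi
  have hpA_minW : ∀ y ∈ conicCombinations v IW, ‖w - pA‖ ≤ ‖w - y‖ :=
    fun y hy ↦ hpA y (conicCombinations_mono (Set.subset_univ IW) hy)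
  have hpW_eq : pW = pA :=
    eq_of_forall_norm_sub_le (conicCombinations v IW).convex hpW_mem hpA_memW hpW hpA_minW
  exact ⟨hpW_eq, hpW_eq ▸ hd.symm⟩
end

section
/- Let I_B be an index set with I_W ⊆ I_B ⊆ I_A, where I_A indexes vectors {v_i} in a Hilbert space H, w ∈ H, d = w − P_{C_A}(w), and I_W = {i ∈ I_A : ⟨v_i, d⟩ = 0}. Let C_B be the cone generated by {v_i : i ∈ I_B}. Then P_{C_W}(w) = P_{C_B}(w) = P_{C_A}(w), and hence w − P_{C_B}(w) = d. -/
/-!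
A nearest point `p` of `w` in a convex cone `C` satisfies `⟪w - p, y⟫ ≤ 0` for all `y ∈ C`
and `⟪w - p, p⟫ = 0`. Writing `p = ∑ μ i • v i` with `μ ≥ 0`, the terms of
`0 = ⟪w - p, p⟫ = ∑ μ i ⟪w - p, v i⟫` are all nonpositive, hence zero, so `p` already lies in
the cone `C_W` of the generators orthogonal to `d = w - p`, and therefore in every
`C_B ⊇ C_W`. As `p` minimises the distance to `w` over `C_A ⊇ C_B`, it also does so over the
convex set `C_B`, where the nearest point is unique.
-/

open RealInnerProductSpace

section NearestPoint

variable {F : Type*} [NormedAddCommGroup F] [InnerProductSpace ℝ F]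

theorem real_inner_sub_sub_nonpos_of_isMinOn {K : Set F} (hK : Convex ℝ K) {w p : F}
    (hp : p ∈ K) (hmin : IsMinOn (‖w - ·‖) K p) : ∀ y ∈ K, ⟪w - p, y - p⟫ ≤ 0 :=
  haveI : Nonempty K := ⟨⟨p, hp⟩⟩
  (norm_eq_iInf_iff_real_inner_le_zero hK hp).1 (hmin.iInf_eq hp).symm

theorem eq_of_isMinOn_norm_sub {K : Set F} (hK : Convex ℝ K) {w p q : F} (hp : p ∈ K)
    (hq : q ∈ K) (hpmin : IsMinOn (‖w - ·‖) K p) (hqmin : IsMinOn (‖w - ·‖) K q) : p = q := by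
  have hpq := real_inner_sub_sub_nonpos_of_isMinOn hK hp hpmin q hq
  have hqp := real_inner_sub_sub_nonpos_of_isMinOn hK hq hqmin p hp
  have hsq : ⟪q - p, q - p⟫ ≤ 0 := by
    calc ⟪q - p, q - p⟫ = ⟪w - p, q - p⟫ + ⟪w - q, p - q⟫ := by
          rw [← neg_sub q p, inner_neg_right, ← sub_eq_add_neg, ← inner_sub_left,
            sub_sub_sub_cancel_left]
      _ ≤ 0 := add_nonpos hpq hqp
  exact (sub_eq_zero.1 (real_inner_self_nonpos.1 hsq)).symm

theorem PointedCone.real_inner_sub_le_zero_of_isMinOn (C : PointedCone ℝ F) {w p : F}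
    (hp : p ∈ C) (hmin : IsMinOn (‖w - ·‖) C p) {y : F} (hy : y ∈ C) : ⟪w - p, y⟫ ≤ 0 := by
  simpa using real_inner_sub_sub_nonpos_of_isMinOn C.convex hp hmin (p + y) (C.add_mem hp hy)

theorem PointedCone.real_inner_sub_self_eq_zero_of_isMinOn (C : PointedCone ℝ F) {w p : F}
    (hp : p ∈ C) (hmin : IsMinOn (‖w - ·‖) C p) : ⟪w - p, p⟫ = 0 := by
  have hle := C.real_inner_sub_le_zero_of_isMinOn hp hmin hp
  have hge := real_inner_sub_sub_nonpos_of_isMinOn C.convex hp hmin 0 C.zero_mem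
  rw [zero_sub, inner_neg_right] at hge
  linarith

end NearestPoint

section ConeOn

variable {H : Type*} [AddCommGroup H] [Module ℝ H] {ι : Type*} [Fintype ι]

def coneOn (v : ι → H) (s : Set ι) : PointedCone ℝ H where
  carrier := {x | ∃ μ : ι → ℝ, (∀ i, 0 ≤ μ i) ∧ (∀ i, i ∉ s → μ i = 0) ∧ x = ∑ i, μ i • v i}
  add_mem' := by
    rintro _ _ ⟨μ, hμ, hμs, rfl⟩ ⟨ν, hν, hνs, rfl⟩
    refine ⟨μ + ν, fun i => add_nonneg (hμ i) (hν i), fun i hi => ?_, ?_⟩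
    · simp [hμs i hi, hνs i hi]
    · simp only [Pi.add_apply, add_smul, Finset.sum_add_distrib]
  zero_mem' := ⟨0, fun _ => le_rfl, fun _ _ => rfl, by simp⟩
  smul_mem' := by
    rintro c _ ⟨μ, hμ, hμs, rfl⟩
    refine ⟨fun i => c * μ i, fun i => mul_nonneg c.2 (hμ i), fun i hi => by simp [hμs i hi], ?_⟩
    simp only [← Nonneg.coe_smul, Finset.smul_sum, smul_smul]

variable (v : ι → H)

theorem coe_coneOn_univ : (coneOn v Set.univ : Set H) =
    {x | ∃ μ : ι → ℝ, (∀ i, 0 ≤ μ i) ∧ x = ∑ i, μ i • v i} := by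
  ext x
  simp [coneOn]

theorem coneOn_mono {s t : Set ι} (hst : s ⊆ t) : coneOn v s ≤ coneOn v t := by
  rintro _ ⟨μ, hμ, hμs, rfl⟩
  exact ⟨μ, hμ, fun i hi => hμs i (fun h => hi (hst h)), rfl⟩

theorem apply_mem_coneOn {s : Set ι} {i : ι} (hi : i ∈ s) : v i ∈ coneOn v s := by
  classical
  refine ⟨Pi.single i 1, fun j => ?_, fun j hj => ?_, by simp [Pi.single_apply]⟩
  · by_cases h : j = i <;> simp [h]
  · simp [show j ≠ i by rintro rfl; exact hj hi]

end ConeOn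

theorem mem_coneOn_orthogonal_of_isMinOn {H : Type*} [NormedAddCommGroup H]
    [InnerProductSpace ℝ H] {ι : Type*} [Fintype ι] (v : ι → H) {s : Set ι} {w p : H}
    (hp : p ∈ coneOn v s) (hmin : IsMinOn (‖w - ·‖) (coneOn v s) p) :
    p ∈ coneOn v {i | ⟪v i, w - p⟫ = 0} := by
  obtain ⟨μ, hμ, hμs, hpμ⟩ := id hp
  have hterm_nonpos : ∀ i ∈ Finset.univ, μ i * ⟪w - p, v i⟫ ≤ 0 := by
    intro i _
    by_cases hi : i ∈ s
    · exact mul_nonpos_of_nonneg_of_nonpos (hμ i)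
        ((coneOn v s).real_inner_sub_le_zero_of_isMinOn hp hmin (apply_mem_coneOn v hi))
    · simp [hμs i hi]
  have hsum : ∑ i, μ i * ⟪w - p, v i⟫ = 0 := by
    simp_rw [← real_inner_smul_right, ← inner_sum, ← hpμ]
    exact (coneOn v s).real_inner_sub_self_eq_zero_of_isMinOn hp hmin
  have hterm := (Finset.sum_eq_zero_iff_of_nonpos hterm_nonpos).1 hsum
  refine ⟨μ, hμ, fun i hi => ?_, hpμ⟩
  rcases mul_eq_zero.1 (hterm i (Finset.mem_univ i)) with h | h
  · exact h
  · exact hi.elim (by rw [Set.mem_ofPred_eq, real_inner_comm]; exact h)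

/-- For any index set `I_B` with `I_W ⊆ I_B ⊆ I_A`, the projections of `w`
onto `C_W`, `C_B` and `C_A` all coincide. -/
theorem stmt8 {H : Type*} [NormedAddCommGroup H] [InnerProductSpace ℝ H]
    {ι : Type*} [Fintype ι] (v : ι → H)
    (CA : Set H)
    (hCA : CA = {x | ∃ μ : ι → ℝ, (∀ i, 0 ≤ μ i) ∧ x = ∑ i, μ i • v i})
    (w pA : H) (hpA_mem : pA ∈ CA) (hpA : ∀ y ∈ CA, ‖w - pA‖ ≤ ‖w - y‖)
    (d : H) (hd : d = w - pA)
    (IW : Set ι) (hIW : IW = {i | ⟪v i, d⟫ = 0})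
    (IB : Set ι) (hWB : IW ⊆ IB)
    (CW : Set H)
    (hCW : CW = {x | ∃ μ : ι → ℝ, (∀ i, 0 ≤ μ i) ∧ (∀ i, i ∉ IW → μ i = 0) ∧
      x = ∑ i, μ i • v i})
    (CB : Set H)
    (hCB : CB = {x | ∃ μ : ι → ℝ, (∀ i, 0 ≤ μ i) ∧ (∀ i, i ∉ IB → μ i = 0) ∧
      x = ∑ i, μ i • v i})
    (pW : H) (hpW_mem : pW ∈ CW) (hpW : ∀ y ∈ CW, ‖w - pW‖ ≤ ‖w - y‖)
    (pB : H) (hpB_mem : pB ∈ CB) (hpB : ∀ y ∈ CB, ‖w - pB‖ ≤ ‖w - y‖) :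
    pW = pB ∧ pB = pA ∧ w - pB = d := by
  rw [← coe_coneOn_univ] at hCA
  subst hCA hd hIW hCW hCB
  have hminA : IsMinOn (‖w - ·‖) (coneOn v Set.univ) pA := isMinOn_iff.2 hpA
  have hpA_W : pA ∈ coneOn v {i | ⟪v i, w - pA⟫ = 0} :=
    mem_coneOn_orthogonal_of_isMinOn v hpA_mem hminA
  have hWA : pW = pA := eq_of_isMinOn_norm_sub (coneOn v _).convex hpW_mem hpA_W
    (isMinOn_iff.2 hpW) (hminA.on_subset (coneOn_mono v (Set.subset_univ _)))
  have hBA : pB = pA := eq_of_isMinOn_norm_sub (coneOn v _).convex hpB_mem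
    (coneOn_mono v hWB hpA_W) (isMinOn_iff.2 hpB)
    (hminA.on_subset (coneOn_mono v (Set.subset_univ _)))
  exact ⟨hWA.trans hBA.symm, hBA, by rw [hBA]⟩
end

section
/- Optimality of the correctable steepest descent direction: let H be a real Hilbert space, w ∈ H, let C_W be the convex cone generated by vectors {v_i : i ∈ I_W}, and set d_W = w − P_{C_W}(w). Suppose additionally ⟨v_i, d_W⟩ = 0 for all i ∈ I_W. Let d ∈ H be any direction with ⟨d, v_i⟩ = 0 for all i ∈ I_W, and let d(u) be the orthogonal projection of w onto span{d}. Then −‖d_W‖² ≤ −‖d(u)‖² ≤ 0, i.e. ‖d(u)‖ ≤ ‖d_W‖. -/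
open RealInnerProductSpace

/-- Optimality of the CSDD: any correctable direction's projection component
`d(u)` of `w` satisfies `-‖d_W‖² ≤ -‖d(u)‖² ≤ 0`, i.e. `‖d(u)‖ ≤ ‖d_W‖`. -/
theorem stmt9 {H : Type*} [NormedAddCommGroup H] [InnerProductSpace ℝ H]
    {ι : Type*} [Fintype ι] (v : ι → H)
    (CW : Set H)
    (hCW : CW = {x | ∃ μ : ι → ℝ, (∀ i, 0 ≤ μ i) ∧ x = ∑ i, μ i • v i})
    (w pW : H) (hpW_mem : pW ∈ CW) (hpW : ∀ y ∈ CW, ‖w - pW‖ ≤ ‖w - y‖)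
    (dW : H) (hdW : dW = w - pW)
    (hdWperp : ∀ i, ⟪v i, dW⟫ = 0)
    (d : H) (hd_corr : ∀ i, ⟪d, v i⟫ = 0)
    (du : H) (hdu_mem : du ∈ Submodule.span ℝ {d}) (hdu_perp : ⟪w - du, d⟫ = 0) :
    -‖dW‖ ^ 2 ≤ -‖du‖ ^ 2 ∧ -‖du‖ ^ 2 ≤ 0 ∧ ‖du‖ ≤ ‖dW‖ := by
  obtain ⟨c, hc⟩ := Submodule.mem_span_singleton.mp hdu_mem
  subst hc
  -- pW ⊥ d
  have hpWd : ⟪pW, d⟫ = 0 := by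
    subst hCW
    obtain ⟨μ, hμ, hsum⟩ := hpW_mem
    rw [hsum, sum_inner]
    refine Finset.sum_eq_zero fun i _ => ?_
    rw [real_inner_smul_left, real_inner_comm, hd_corr i, mul_zero]
  -- ⟪w - (c • d), (c • d)⟫ = 0
  have h1 : ⟪w - (c • d), (c • d)⟫ = 0 := by
    rw [real_inner_smul_right, hdu_perp, mul_zero]
  -- ‖(c • d)‖² = ⟪w, (c • d)⟫
  have h2 : ‖(c • d)‖ ^ 2 = ⟪w, (c • d)⟫ := by
    have := h1
    rw [inner_sub_left] at this
    have : ⟪(c • d), (c • d)⟫ = ⟪w, (c • d)⟫ := by linarith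
    rw [← real_inner_self_eq_norm_sq] at *
    linarith
  -- ⟪w, (c • d)⟫ = ⟪dW, (c • d)⟫
  have h3 : ⟪w, (c • d)⟫ = ⟪dW, (c • d)⟫ := by
    have hw : w = dW + pW := by rw [hdW]; abel
    have hpWdu : ⟪pW, (c • d)⟫ = 0 := by
      rw [real_inner_smul_right, hpWd, mul_zero]
    rw [hw, inner_add_left, hpWdu, add_zero]
  have key : ‖(c • d)‖ ≤ ‖dW‖ := by
    rcases eq_or_lt_of_le (norm_nonneg (c • d)) with h | h
    · rw [← h]; exact norm_nonneg dW
    · have : ‖(c • d)‖ ^ 2 ≤ ‖dW‖ * ‖(c • d)‖ := by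
        rw [h2, h3]; exact real_inner_le_norm dW (c • d)
      nlinarith
  refine ⟨?_, ?_, key⟩
  · have := pow_le_pow_left₀ (norm_nonneg _) key 2
    linarith
  · have := sq_nonneg ‖c • d‖
    linarith
end

section
/- Superlinear correctability: let J, g_1, …, g_m : ℝⁿ → ℝ be C¹, u feasible with working index set I_W = {1,…,k} ⊆ I_A(u) (so g_i(u) = 0 for i ≤ k), assume the gradients g_1'(u),…,g_k'(u) are linearly independent, and let d ∈ ℝⁿ satisfy ⟨g_i'(u), d⟩ = 0 for all i ∈ I_W. Assume each g_i is C¹ in a neighborhood of u. Then there exist t₀ > 0 and C¹ functions c_1, …, c_k : (−t₀, t₀) → ℝ with c_i(0) = 0, c_i'(0) = 0 (hence c_i(t) = o(t)), such that for u(t) = u + t d + Σ_{i=1}^k c_i(t) g_i'(u), we have g_i(u(t)) = 0 for all i ∈ I_W and all |t| < t₀. -/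
/-!
Apply the implicit function theorem to `G(t, c) = (f_i(u + t d + Σ c_j ∇f_j(u)))_i` at the origin.
Its partial derivative in `c` is the Gram matrix of the gradients, nonsingular by linear
independence, and its partial derivative in `t` is `(⟪∇f_i(u), d⟫)_i = 0`. Hence the implicit
function `c(t)` satisfies `c'(0) = -(∂_c G)⁻¹ ∂_t G = 0`.
-/

open RealInnerProductSpace Set

section ImplicitCurve

variable {E V W : Type*} [NormedAddCommGroup E] [NormedSpace ℝ E]
  [NormedAddCommGroup V] [NormedSpace ℝ V] [CompleteSpace V]
  [NormedAddCommGroup W] [NormedSpace ℝ W] [CompleteSpace W]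

theorem exists_implicit_curve_of_fderiv_inl_eq_zero {G : ℝ × V → W}
    (hG : ContDiffAt ℝ 1 G 0) (hG0 : G 0 = 0)
    (ht : fderiv ℝ G 0 ∘L .inl ℝ ℝ V = 0)
    (hc : (fderiv ℝ G 0 ∘L .inr ℝ ℝ V).IsInvertible) :
    ∃ t₀ > 0, ∃ γ : ℝ → V, ContDiffOn ℝ 1 γ (Ioo (-t₀) t₀) ∧ γ 0 = 0 ∧
      HasDerivAt γ 0 0 ∧ ∀ t, |t| < t₀ → G (t, γ t) = 0 := by
  set γ := hG.implicitFunction one_ne_zero hc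
  have hγ0 : γ 0 = 0 := hG.implicitFunction_apply_self one_ne_zero hc
  have hγ' : HasDerivAt γ 0 0 := by
    have := (hG.hasStrictFDerivAt_implicitFunction one_ne_zero hc).hasFDerivAt
    rw [ht, ContinuousLinearMap.comp_zero] at this
    simpa using this.hasDerivAt
  obtain ⟨t₀, ht₀, h⟩ := Metric.eventually_nhds_iff_ball.1
    (((hG.contDiffAt_implicitFunction one_ne_zero hc).eventually (by simp)).and
      (hG.eventually_apply_implicitFunction one_ne_zero hc))
  have hball : ∀ t, |t| < t₀ → t ∈ Metric.ball (0 : ℝ) t₀ := by simp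
  refine ⟨t₀, ht₀, γ, fun t ht => (h t (hball t (abs_lt.2 ht))).1.contDiffWithinAt, hγ0, hγ',
    fun t ht => ?_⟩
  simpa [hG0] using (h t (hball t ht)).2

theorem exists_correction_curve {F : E → W} {u d : E} (A : V →L[ℝ] E)
    (hF : ContDiffAt ℝ 1 F u) (hFu : F u = 0) (hd : fderiv ℝ F u d = 0)
    (hA : (fderiv ℝ F u ∘L A).IsInvertible) :
    ∃ t₀ > 0, ∃ γ : ℝ → V, ContDiffOn ℝ 1 γ (Ioo (-t₀) t₀) ∧ γ 0 = 0 ∧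
      HasDerivAt γ 0 0 ∧ ∀ t, |t| < t₀ → F (u + t • d + A (γ t)) = 0 := by
  set L : ℝ × V →L[ℝ] E :=
    (ContinuousLinearMap.fst ℝ ℝ V).smulRight d + A ∘L ContinuousLinearMap.snd ℝ ℝ V
  have hL : ∀ p : ℝ × V, u + L p = u + p.1 • d + A p.2 := by simp [L, add_assoc]
  have hFL : ContDiffAt ℝ 1 (fun p => F (u + L p)) 0 := by
    refine ContDiffAt.comp (g := F) 0 ?_ (contDiffAt_const.add L.contDiff.contDiffAt)
    simpa using hF
  have hderiv : fderiv ℝ (fun p => F (u + L p)) 0 = fderiv ℝ F u ∘L L := by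
    refine HasFDerivAt.fderiv ?_
    have hFu' : HasFDerivAt F (fderiv ℝ F u) (u + L 0) := by
      simpa using (hF.differentiableAt one_ne_zero).hasFDerivAt
    exact hFu'.comp 0 (L.hasFDerivAt.const_add u)
  obtain ⟨t₀, ht₀, γ, hγ, hγ0, hγ', hFγ⟩ := exists_implicit_curve_of_fderiv_inl_eq_zero hFL
    (by simpa using hFu) (by rw [hderiv]; ext; simp [L, hd])
    (by rw [hderiv]; convert hA using 1; ext; simp [L])
  exact ⟨t₀, ht₀, γ, hγ, hγ0, hγ', fun t ht => by simpa [hL] using hFγ t ht⟩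

end ImplicitCurve

theorem LinearIndependent.injective_inner_sum_smul {ι E : Type*} [Fintype ι]
    [NormedAddCommGroup E] [InnerProductSpace ℝ E] {v : ι → E} (hv : LinearIndependent ℝ v) :
    Function.Injective fun c : ι → ℝ => fun i => ⟪v i, ∑ j, c j • v j⟫ := by
  intro a b hab
  obtain ⟨w, hw_def⟩ : ∃ w, w = ∑ j, (a j - b j) • v j := ⟨_, rfl⟩
  have hvw : ∀ i, ⟪v i, w⟫ = 0 := fun i => by
    simp [hw_def, sub_smul, Finset.sum_sub_distrib, inner_sub_right, congrFun hab i]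
  have hw : w = 0 := by
    rw [← inner_self_eq_zero (𝕜 := ℝ)]
    nth_rw 1 [hw_def]
    simp [sum_inner, real_inner_smul_left, hvw]
  funext i
  exact sub_eq_zero.1 (Fintype.linearIndependent_iff.1 hv _ (hw_def ▸ hw) i)

theorem exists_superlinear_correction {ι E : Type*} [Fintype ι]
    [NormedAddCommGroup E] [InnerProductSpace ℝ E] [CompleteSpace E] {f : ι → E → ℝ} {u : E}
    (hf : ∀ i, ContDiffAt ℝ 1 (f i) u) (hu : ∀ i, f i u = 0)
    (hli : LinearIndependent ℝ fun i => gradient (f i) u)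
    {d : E} (hd : ∀ i, ⟪gradient (f i) u, d⟫ = 0) :
    ∃ t₀ > 0, ∃ c : ι → ℝ → ℝ, (∀ i, ContDiffOn ℝ 1 (c i) (Ioo (-t₀) t₀)) ∧
      (∀ i, c i 0 = 0) ∧ (∀ i, deriv (c i) 0 = 0) ∧
      ∀ t, |t| < t₀ → ∀ i, f i (u + t • d + ∑ j, c j t • gradient (f j) u) = 0 := by
  set v := fun i => gradient (f i) u
  set F : E → ι → ℝ := fun x i => f i x
  have hF' : ∀ x, fderiv ℝ F u x = fun i => ⟪v i, x⟫ := fun x => by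
    rw [fderiv_pi fun i => (hf i).differentiableAt one_ne_zero]
    ext i
    simp [v, inner_gradient_left]
  set A : (ι → ℝ) →L[ℝ] E := (Fintype.linearCombination ℝ v).toContinuousLinearMap
  have hA : ∀ c, A c = ∑ j, c j • v j := Fintype.linearCombination_apply ℝ v
  have hinj : Function.Injective (fderiv ℝ F u ∘L A) := by
    convert hli.injective_inner_sum_smul using 2 with c
    simp [hF', hA, v]
  obtain ⟨t₀, ht₀, γ, hγ, hγ0, hγ', hFγ⟩ := exists_correction_curve A (contDiffAt_pi.2 hf)
    (funext hu) (show fderiv ℝ F u d = 0 by rw [hF']; exact funext hd)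
    ⟨(LinearEquiv.ofInjectiveEndo _ hinj).toContinuousLinearEquiv, rfl⟩
  refine ⟨t₀, ht₀, fun i t => γ t i, fun i => contDiffOn_pi.1 hγ i, fun i => by simp [hγ0],
    fun i => (hasDerivAt_pi.1 hγ' i).deriv, fun t ht i => ?_⟩
  simpa [hA, v] using congrFun (hFγ t ht) i

theorem stmt15_general {n m k : ℕ} (hk : k ≤ m)
    (g : Fin m → EuclideanSpace ℝ (Fin n) → ℝ) (hg : ∀ i, ContDiff ℝ 1 (g i))
    (u : EuclideanSpace ℝ (Fin n))
    (hactive : ∀ i : Fin k, g (Fin.castLE hk i) u = 0)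
    (hli : LinearIndependent ℝ (fun i : Fin k => gradient (g (Fin.castLE hk i)) u))
    (d : EuclideanSpace ℝ (Fin n))
    (hd : ∀ i : Fin k, ⟪gradient (g (Fin.castLE hk i)) u, d⟫ = 0) :
    ∃ t₀ : ℝ, 0 < t₀ ∧ ∃ c : Fin k → ℝ → ℝ,
      (∀ i, ContDiffOn ℝ 1 (c i) (Set.Ioo (-t₀) t₀)) ∧
      (∀ i, c i 0 = 0) ∧ (∀ i, deriv (c i) 0 = 0) ∧
      ∀ t : ℝ, |t| < t₀ → ∀ i : Fin k,
        g (Fin.castLE hk i)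
          (u + t • d + ∑ j, c j t • gradient (g (Fin.castLE hk j)) u) = 0 :=
  exists_superlinear_correction (fun _ => (hg _).contDiffAt) hactive hli hd

/-- Superlinear correctability: by the implicit function theorem, there are C¹
correction functions `c_i` with `c_i(0) = 0`, `c_i'(0) = 0` keeping the working
constraints exactly active along `u(t) = u + t d + Σ c_i(t) g_i'(u)`. -/
theorem stmt15 {n m k : ℕ} (hk : k ≤ m)
    (J : EuclideanSpace ℝ (Fin n) → ℝ) (hJ : ContDiff ℝ 1 J)
    (g : Fin m → EuclideanSpace ℝ (Fin n) → ℝ) (hg : ∀ i, ContDiff ℝ 1 (g i))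
    (u : EuclideanSpace ℝ (Fin n)) (hu_feas : ∀ i, g i u ≤ 0)
    (hactive : ∀ i : Fin k, g (Fin.castLE hk i) u = 0)
    (hli : LinearIndependent ℝ (fun i : Fin k => gradient (g (Fin.castLE hk i)) u))
    (d : EuclideanSpace ℝ (Fin n))
    (hd : ∀ i : Fin k, ⟪gradient (g (Fin.castLE hk i)) u, d⟫ = 0) :
    ∃ t₀ : ℝ, 0 < t₀ ∧ ∃ c : Fin k → ℝ → ℝ,
      (∀ i, ContDiffOn ℝ 1 (c i) (Set.Ioo (-t₀) t₀)) ∧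
      (∀ i, c i 0 = 0) ∧ (∀ i, deriv (c i) 0 = 0) ∧
      ∀ t : ℝ, |t| < t₀ → ∀ i : Fin k,
        g (Fin.castLE hk i)
          (u + t • d + ∑ j, c j t • gradient (g (Fin.castLE hk j)) u) = 0 :=
  stmt15_general hk g hg u hactive hli d hd
end
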